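/- Let n and r be distinct prime numbers with r > 2, and let S = S(n, r). Then the number of affine sets A ∈ 𝔸 fixed under σ^n (i.e., with pointwise image σ^n(A) = A) is: 1 if r = p; 0 if r ≠ p and r does not divide q^n − 1; and r − 1 if r ≠ p and r divides q^n − 1. -/

import Mathlib

/-!
The Frobenius `φ : x ↦ x ^ q` of `L/K` (with `q = #K`, `r = [L : K]`) is a `K`-algebra map with
minimal polynomial `X ^ r - 1`, and it maps `A(α)` onto `A(φ α)`. So `A(α)` is fixed iff
`φ α = a α + b` with `a, b ∈ K`, and iterating `r` times (`φ ^ r = 1`, `α ∉ K`) forces `a ^ r = 1`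
and `b (1 + a + ⋯ + a ^ (r - 1)) = 0`.

If `r = p`, then `a = 1` and `b ≠ 0`. As `X ^ p - 1 = (X - 1) ^ p`, the map `φ - 1` is nilpotent
and nonzero, which yields an Artin–Schreier element `α₀` with `φ α₀ = α₀ + b₀`, `b₀ ≠ 0`; every
other solution is `(b / b₀) α₀` plus an element of `K`, so exactly one affine set is fixed.

If `r ≠ p`, then `a ≠ 1` (otherwise `r b = 0`, so `b = 0` and `α ∈ K`), and shifting `α` by
`b / (a - 1)` turns it into an eigenvector of `φ` for `a`. Each `r`-th root of unity in `K` is an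
eigenvalue, its eigenvectors are `K`-multiples of each other, and `a` is determined by the affine
set. Hence the fixed affine sets correspond to the `r`-th roots of unity `a ≠ 1` in `K`: `r - 1` of
them if `r ∣ q - 1`, none otherwise.
-/

open Polynomial

/-- The affine set `A(α) = {a α + b : a, b ∈ K, a ≠ 0}`. -/
def affineSet (K : Type*) {L : Type*} [Field K] [Field L] [Algebra K L] (α : L) : Set L :=
  {β | ∃ a b : K, a ≠ 0 ∧ β = algebraMap K L a * α + algebraMap K L b}

/-- The affine sets `A(α)` for `α` of degree `r` over `K` that are fixed (as sets, pointwise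
image) by the map `x ↦ x ^ m`. -/
def fixedAffineSets (K L : Type*) [Field K] [Field L] [Algebra K L] (r m : ℕ) :
    Set (Set L) :=
  {A | (∃ α : L, (minpoly K α).natDegree = r ∧ A = affineSet K α) ∧
    (fun x : L => x ^ m) '' A = A}

theorem Module.End.exists_apply_ne_zero_and_apply_apply_eq_zero {R M : Type*} [Ring R]
    [AddCommGroup M] [Module R M] {e : Module.End R M} (hnil : IsNilpotent e) (he : e ≠ 0) :
    ∃ x, e x ≠ 0 ∧ e (e x) = 0 := by
  have : Nontrivial (Module.End R M) := nontrivial_of_ne e 0 he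
  obtain ⟨k, hk⟩ : ∃ k, nilpotencyClass e = k + 1 + 1 := by
    have h0 := pos_nilpotencyClass_iff.2 hnil
    have h1 : nilpotencyClass e ≠ 1 := nilpotencyClass_eq_one.not.2 he
    exact ⟨nilpotencyClass e - 2, by omega⟩
  obtain ⟨hzero, hne⟩ := nilpotencyClass_eq_succ_iff.1 hk
  obtain ⟨y, hy⟩ : ∃ y, (e ^ (k + 1)) y ≠ 0 := by
    by_contra! h
    exact hne (LinearMap.ext h)
  refine ⟨(e ^ k) y, by rwa [← Module.End.mul_apply, ← pow_succ'], ?_⟩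
  rw [← Module.End.mul_apply e (e ^ k), ← pow_succ', ← Module.End.mul_apply, ← pow_succ',
    hzero, LinearMap.zero_apply]

section AffineSet

variable {K L : Type*} [Field K] [Field L] [Algebra K L]

theorem mem_affineSet_self (α : L) : α ∈ affineSet K α :=
  ⟨1, 0, one_ne_zero, by simp⟩

theorem affineSet_algebraMap_mul_add {c : K} (hc : c ≠ 0) (d : K) (α : L) :
    affineSet K (algebraMap K L c * α + algebraMap K L d) = affineSet K α := by
  ext β
  constructor
  · rintro ⟨a, b, ha, rfl⟩
    exact ⟨a * c, a * d + b, mul_ne_zero ha hc, by simp only [map_mul, map_add]; ring⟩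
  · rintro ⟨a, b, ha, rfl⟩
    obtain ⟨u, rfl⟩ : ∃ u, a = u * c := ⟨a / c, (div_mul_cancel₀ a hc).symm⟩
    refine ⟨u, b - u * d, left_ne_zero_of_mul ha, ?_⟩
    simp only [map_mul, map_sub]
    ring

theorem affineSet_eq_iff_mem {α β : L} : affineSet K β = affineSet K α ↔ β ∈ affineSet K α := by
  refine ⟨fun h => h ▸ mem_affineSet_self β, ?_⟩
  rintro ⟨c, d, hc, rfl⟩
  exact affineSet_algebraMap_mul_add hc d α

theorem eq_and_eq_of_algebraMap_mul_add_eq {α : L} (hα : α ∉ Set.range (algebraMap K L))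
    {a b a' b' : K}
    (h : algebraMap K L a * α + algebraMap K L b = algebraMap K L a' * α + algebraMap K L b') :
    a = a' ∧ b = b' := by
  obtain rfl : a = a' := by
    by_contra ha
    have ha' : algebraMap K L (a - a') ≠ 0 := (_root_.map_ne_zero _).2 (sub_ne_zero.2 ha)
    refine hα ⟨(b' - b) / (a - a'), ?_⟩
    rw [map_div₀, div_eq_iff ha', map_sub, map_sub]
    linear_combination -h
  exact ⟨rfl, (algebraMap K L).injective (add_left_cancel h)⟩

theorem AlgHom.image_affineSet {L' : Type*} [Field L'] [Algebra K L'] (f : L →ₐ[K] L') (α : L) :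
    f '' affineSet K α = affineSet K (f α) := by
  ext β
  constructor
  · rintro ⟨-, ⟨a, b, ha, rfl⟩, rfl⟩
    exact ⟨a, b, ha, by simp⟩
  · rintro ⟨a, b, ha, rfl⟩
    exact ⟨_, ⟨a, b, ha, rfl⟩, by simp⟩

theorem natDegree_minpoly_eq_finrank_iff [FiniteDimensional K L]
    (hr : (Module.finrank K L).Prime) (α : L) :
    (minpoly K α).natDegree = Module.finrank K L ↔ α ∉ Set.range (algebraMap K L) := by
  have hdvd := minpoly.degree_dvd (IsIntegral.of_finite K α)
  rw [← RingHom.coe_range, SetLike.mem_coe, ← minpoly.natDegree_eq_one_iff]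
  refine ⟨fun h h1 => hr.one_lt.ne' (h ▸ h1), fun h1 => ?_⟩
  exact (hr.eq_one_or_self_of_dvd _ hdvd).resolve_left h1

end AffineSet

section Frobenius

variable {K L : Type*} [Field K] [Field L] [Algebra K L] [Fintype K]

theorem pow_card_pow_eq_of_pow_card_eq {α : L} {a b : K}
    (h : α ^ Fintype.card K = algebraMap K L a * α + algebraMap K L b) (k : ℕ) :
    α ^ Fintype.card K ^ k =
      algebraMap K L (a ^ k) * α + algebraMap K L (b * ∑ i ∈ Finset.range k, a ^ i) := by
  induction k with
  | zero => simp
  | succ k ih =>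
    rw [pow_succ, pow_mul, ih, ← FiniteField.frobeniusAlgHom_apply (K := K)]
    simp only [map_add, map_mul, map_pow, AlgHom.commutes, FiniteField.frobeniusAlgHom_apply, h,
      Finset.sum_range_succ]
    ring

theorem eq_of_affineSet_eq {α β : L} (hα : α ∉ Set.range (algebraMap K L))
    (h : affineSet K α = affineSet K β) {a b a' b' : K}
    (hαa : α ^ Fintype.card K = algebraMap K L a * α + algebraMap K L b)
    (hβa : β ^ Fintype.card K = algebraMap K L a' * β + algebraMap K L b') :
    a = a' := by
  obtain ⟨c, d, hc, rfl⟩ := affineSet_eq_iff_mem.1 h.symm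
  rw [← FiniteField.frobeniusAlgHom_apply (K := K)] at hβa
  simp only [map_add, map_mul, AlgHom.commutes, FiniteField.frobeniusAlgHom_apply, hαa] at hβa
  have := (eq_and_eq_of_algebraMap_mul_add_eq hα (a := c * a) (b := c * b + d)
    (a' := a' * c) (b' := a' * d + b') (by simp only [map_add, map_mul]; linear_combination hβa)).1
  exact mul_left_cancel₀ hc (this.trans (mul_comm a' c))

variable [Fintype L]

theorem pow_card_eq_self_iff_mem_range (x : L) :
    x ^ Fintype.card K = x ↔ x ∈ Set.range (algebraMap K L) := by
  refine ⟨fun hx => ?_, ?_⟩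
  · rw [IsGalois.mem_range_algebraMap_iff_fixed]
    intro g
    obtain ⟨k, rfl⟩ := (FiniteField.bijective_frobeniusAlgEquivOfAlgebraic_pow K L).2 g
    rw [AlgEquiv.coe_pow, FiniteField.coe_frobeniusAlgEquivOfAlgebraic]
    exact Function.iterate_fixed hx k
  · rintro ⟨c, rfl⟩
    rw [← map_pow, FiniteField.pow_card]

theorem mem_fixedAffineSets_finrank_iff (hr : (Module.finrank K L).Prime) (A : Set L) :
    A ∈ fixedAffineSets K L (Module.finrank K L) (Fintype.card K) ↔
      ∃ α ∉ Set.range (algebraMap K L), α ^ Fintype.card K ∈ affineSet K α ∧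
        A = affineSet K α := by
  have himage (α : L) : (fun x : L => x ^ Fintype.card K) '' affineSet K α =
      affineSet K (α ^ Fintype.card K) :=
    (FiniteField.frobeniusAlgHom K L).image_affineSet α
  simp only [fixedAffineSets, Set.mem_ofPred_eq, natDegree_minpoly_eq_finrank_iff hr]
  constructor
  · rintro ⟨⟨α, hα, rfl⟩, hfix⟩
    exact ⟨α, hα, affineSet_eq_iff_mem.1 (himage α ▸ hfix), rfl⟩
  · rintro ⟨α, hα, hmem, rfl⟩
    exact ⟨⟨α, hα, rfl⟩, himage α ▸ affineSet_eq_iff_mem.2 hmem⟩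

theorem pow_finrank_eq_one_of_pow_card_eq {α : L} (hα : α ∉ Set.range (algebraMap K L))
    {a b : K} (h : α ^ Fintype.card K = algebraMap K L a * α + algebraMap K L b) :
    a ^ Module.finrank K L = 1 ∧ b * ∑ i ∈ Finset.range (Module.finrank K L), a ^ i = 0 := by
  have key := pow_card_pow_eq_of_pow_card_eq h (Module.finrank K L)
  rw [← Module.card_eq_pow_finrank, FiniteField.pow_card] at key
  exact (eq_and_eq_of_algebraMap_mul_add_eq hα (a := 1) (b := 0)
    (by simpa using key)).imp Eq.symm Eq.symm

theorem exists_pow_card_eq_mul {a : K} (ha : a ^ Module.finrank K L = 1) :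
    ∃ α : L, α ≠ 0 ∧ α ^ Fintype.card K = algebraMap K L a * α := by
  have : Module.End.HasEigenvalue (FiniteField.frobeniusAlgHom K L).toLinearMap a := by
    rw [Module.End.hasEigenvalue_iff_isRoot, FiniteField.minpoly_frobeniusAlgHom]
    simp [ha]
  obtain ⟨α, hα⟩ := this.exists_hasEigenvector
  exact ⟨α, hα.2, by simpa [Algebra.smul_def] using hα.apply_eq_smul⟩

theorem exists_pow_card_eq_add [CharP K (Module.finrank K L)] :
    ∃ α : L, ∃ b : K, b ≠ 0 ∧ α ^ Fintype.card K = α + algebraMap K L b := by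
  set r := Module.finrank K L
  have hr : r.Prime := CharP.char_is_prime K r
  have : Fact r.Prime := ⟨hr⟩
  set φ := FiniteField.frobeniusAlgHom K L
  have hnil : IsNilpotent (φ.toLinearMap - 1) := by
    refine ⟨r, ?_⟩
    have := minpoly.aeval K φ.toLinearMap
    rwa [FiniteField.minpoly_frobeniusAlgHom, ← one_pow r, ← sub_pow_char, map_pow, map_sub,
      aeval_X, map_one] at this
  have hne : φ.toLinearMap - 1 ≠ 0 := by
    intro h
    have hφ : φ = 1 := AlgHom.ext fun x => by
      simpa [sub_eq_zero] using LinearMap.congr_fun h x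
    have : orderOf φ = r := FiniteField.orderOf_frobeniusAlgHom K L
    rw [hφ, orderOf_one] at this
    exact hr.one_lt.ne this
  obtain ⟨α, hα, hαα⟩ := Module.End.exists_apply_ne_zero_and_apply_apply_eq_zero hnil hne
  have hφ_sub (x : L) : (φ.toLinearMap - 1) x = x ^ Fintype.card K - x := rfl
  rw [hφ_sub ((φ.toLinearMap - 1) α), sub_eq_zero] at hαα
  obtain ⟨b, hb⟩ := (pow_card_eq_self_iff_mem_range _).1 hαα
  refine ⟨α, b, ?_, ?_⟩
  · rintro rfl
    exact hα (by rw [← hb, map_zero])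
  · rw [hb, hφ_sub]
    ring

theorem affineSet_eq_of_pow_card_eq_mul {α β : L} (hα : α ≠ 0) (hβ : β ≠ 0) {a : K}
    (hαa : α ^ Fintype.card K = algebraMap K L a * α)
    (hβa : β ^ Fintype.card K = algebraMap K L a * β) :
    affineSet K α = affineSet K β := by
  have ha : algebraMap K L a ≠ 0 := by
    rintro h
    rw [h, zero_mul, pow_eq_zero_iff Fintype.card_ne_zero] at hαa
    exact hα hαa
  obtain ⟨c, hc⟩ := (pow_card_eq_self_iff_mem_range (α / β)).1 <| by
    rw [div_pow, hαa, hβa, mul_div_mul_left _ _ ha]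
  have hc0 : c ≠ 0 := by
    rintro rfl
    exact div_ne_zero hα hβ (by rw [← hc, map_zero])
  rw [affineSet_eq_iff_mem]
  exact ⟨c, 0, hc0, by rw [hc, map_zero, add_zero, div_mul_cancel₀ α hβ]⟩

theorem affineSet_eq_of_pow_card_eq_add {α β : L} {a b : K} (ha : a ≠ 0) (hb : b ≠ 0)
    (hαa : α ^ Fintype.card K = α + algebraMap K L a)
    (hβb : β ^ Fintype.card K = β + algebraMap K L b) :
    affineSet K α = affineSet K β := by
  obtain ⟨d, hd⟩ := (pow_card_eq_self_iff_mem_range (α - algebraMap K L (a / b) * β)).1 <| by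
    have hb' : algebraMap K L b ≠ 0 := (_root_.map_ne_zero _).2 hb
    rw [← FiniteField.frobeniusAlgHom_apply (K := K)]
    simp only [map_sub, map_mul, AlgHom.commutes, FiniteField.frobeniusAlgHom_apply, hαa, hβb,
      map_div₀]
    field_simp
    ring
  rw [affineSet_eq_iff_mem]
  exact ⟨a / b, d, div_ne_zero ha hb, by rw [hd]; ring⟩

end Frobenius

theorem ncard_setOf_pow_eq_one_and_ne_one {K : Type*} [Field K] [Fintype K] {r : ℕ}
    (hr : r.Prime) :
    {a : K | a ^ r = 1 ∧ a ≠ 1}.ncard = if r ∣ Fintype.card K - 1 then r - 1 else 0 := by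
  classical
  split_ifs with hdvd
  · have : Fact r.Prime := ⟨hr⟩
    obtain ⟨ζ, hζ⟩ := exists_prime_orderOf_dvd_card r
      (by rwa [Fintype.card_units] : r ∣ Fintype.card Kˣ)
    have hprim : IsPrimitiveRoot (ζ : K) r :=
      IsPrimitiveRoot.coe_units_iff.2 (hζ ▸ IsPrimitiveRoot.orderOf ζ)
    have hroots : {a : K | a ^ r = 1 ∧ a ≠ 1} = ↑(nthRootsFinset r (1 : K) \ {1}) := by
      ext a
      simp [mem_nthRootsFinset hr.pos]
    rw [hroots, Set.ncard_coe_finset, Finset.card_sdiff_of_subset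
      (by simp [mem_nthRootsFinset hr.pos]), hprim.card_nthRootsFinset, Finset.card_singleton]
  · rw [Set.ncard_eq_zero, Set.eq_empty_iff_forall_notMem]
    rintro a ⟨ha, ha1⟩
    have ha0 : a ≠ 0 := ne_zero_pow hr.ne_zero (by rw [ha]; exact one_ne_zero)
    have := pow_gcd_eq_one.2 ⟨ha, FiniteField.pow_card_sub_one_eq_one a ha0⟩
    rw [((Nat.Prime.coprime_iff_not_dvd hr).2 hdvd).gcd_eq_one, pow_one] at this
    exact ha1 this

section Count

variable {K L : Type*} [Field K] [Field L] [Algebra K L] [Fintype K] [Fintype L]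

theorem ncard_fixedAffineSets_of_charP [CharP K (Module.finrank K L)] :
    (fixedAffineSets K L (Module.finrank K L) (Fintype.card K)).ncard = 1 := by
  have hr : (Module.finrank K L).Prime := CharP.char_is_prime K _
  have : Fact (Module.finrank K L).Prime := ⟨hr⟩
  obtain ⟨α₀, b₀, hb₀, h₀⟩ := exists_pow_card_eq_add (K := K) (L := L)
  have hα₀ : α₀ ∉ Set.range (algebraMap K L) := by
    rw [← pow_card_eq_self_iff_mem_range, h₀, add_eq_left, _root_.map_eq_zero]
    exact hb₀
  rw [Set.ncard_eq_one]
  refine ⟨affineSet K α₀, Set.eq_singleton_iff_unique_mem.2 ⟨?_, fun A hA => ?_⟩⟩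
  · exact (mem_fixedAffineSets_finrank_iff hr _).2
      ⟨α₀, hα₀, ⟨1, b₀, one_ne_zero, by simp [h₀]⟩, rfl⟩
  obtain ⟨α, hα, ⟨a, b, -, h⟩, rfl⟩ := (mem_fixedAffineSets_finrank_iff hr A).1 hA
  obtain ⟨har, -⟩ := pow_finrank_eq_one_of_pow_card_eq hα h
  obtain rfl : a = 1 := by
    have : (a - 1) ^ Module.finrank K L = 0 := by rw [sub_pow_char, har, one_pow, sub_self]
    exact sub_eq_zero.1 (pow_eq_zero_iff hr.ne_zero |>.1 this)
  have hb : b ≠ 0 := by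
    rintro rfl
    exact hα ((pow_card_eq_self_iff_mem_range α).1 (by simpa using h))
  exact affineSet_eq_of_pow_card_eq_add hb hb₀ (by simpa using h) h₀

theorem exists_pow_card_eq_mul_of_pow_card_eq (hr0 : (Module.finrank K L : K) ≠ 0) {α : L}
    (hα : α ∉ Set.range (algebraMap K L)) {a b : K}
    (h : α ^ Fintype.card K = algebraMap K L a * α + algebraMap K L b) :
    a ^ Module.finrank K L = 1 ∧ a ≠ 1 ∧ ∃ β : L, β ≠ 0 ∧
      β ^ Fintype.card K = algebraMap K L a * β ∧ affineSet K α = affineSet K β := by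
  obtain ⟨har, hsum⟩ := pow_finrank_eq_one_of_pow_card_eq hα h
  have ha1 : a ≠ 1 := by
    rintro rfl
    have hb : b = 0 := by simpa [hr0] using hsum
    exact hα ((pow_card_eq_self_iff_mem_range α).1 (by simpa [hb] using h))
  have ha1' : algebraMap K L a - 1 ≠ 0 := by
    rw [← map_one (algebraMap K L), ← map_sub, _root_.map_ne_zero]
    exact sub_ne_zero.2 ha1
  refine ⟨har, ha1, α + algebraMap K L (b / (a - 1)), ?_, ?_, ?_⟩
  · intro h0
    exact hα ⟨-(b / (a - 1)), by rw [map_neg, eq_neg_of_add_eq_zero_left h0]⟩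
  · rw [← FiniteField.frobeniusAlgHom_apply (K := K)]
    simp only [map_add, AlgHom.commutes, FiniteField.frobeniusAlgHom_apply, h, map_div₀, map_sub,
      map_one]
    field_simp
    ring
  · rw [eq_comm, affineSet_eq_iff_mem]
    exact ⟨1, b / (a - 1), one_ne_zero, by simp⟩

theorem ncard_fixedAffineSets_of_cast_ne_zero (hr : (Module.finrank K L).Prime)
    (hr0 : (Module.finrank K L : K) ≠ 0) :
    (fixedAffineSets K L (Module.finrank K L) (Fintype.card K)).ncard =
      {a : K | a ^ Module.finrank K L = 1 ∧ a ≠ 1}.ncard := by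
  choose! ev hev0 hev using
    fun (a : K) (ha : a ^ Module.finrank K L = 1) => exists_pow_card_eq_mul (L := L) ha
  have hev_notMem {a : K} (ha : a ^ Module.finrank K L = 1 ∧ a ≠ 1) :
      ev a ∉ Set.range (algebraMap K L) := by
    rw [← pow_card_eq_self_iff_mem_range, hev a ha.1, mul_eq_right₀ (hev0 a ha.1),
      ← map_one (algebraMap K L), (algebraMap K L).injective.eq_iff]
    exact ha.2
  have himage : fixedAffineSets K L (Module.finrank K L) (Fintype.card K) =
      (fun a => affineSet K (ev a)) '' {a | a ^ Module.finrank K L = 1 ∧ a ≠ 1} := by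
    ext A
    rw [mem_fixedAffineSets_finrank_iff hr]
    constructor
    · rintro ⟨α, hα, ⟨a, b, -, h⟩, rfl⟩
      obtain ⟨har, ha1, β, hβ0, hβ, hαβ⟩ := exists_pow_card_eq_mul_of_pow_card_eq hr0 hα h
      exact ⟨a, ⟨har, ha1⟩,
        (affineSet_eq_of_pow_card_eq_mul (hev0 a har) hβ0 (hev a har) hβ).trans hαβ.symm⟩
    · rintro ⟨a, ha, rfl⟩
      have ha0 : a ≠ 0 := ne_zero_pow hr.ne_zero (by rw [ha.1]; exact one_ne_zero)
      exact ⟨ev a, hev_notMem ha, ⟨a, 0, ha0, by simp [hev a ha.1]⟩, rfl⟩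
  rw [himage]
  refine Set.InjOn.ncard_image fun a ha a' ha' h => ?_
  exact eq_of_affineSet_eq (hev_notMem ha) h (b := 0) (b' := 0)
    (by simpa using hev a ha.1) (by simpa using hev a' ha'.1)

end Count

theorem count_fixed_affineSets_sigma_pow_n_distinct_primes_general
    (p t n r : ℕ) (hp : p.Prime) (hr : r.Prime)
    (K L : Type*) [Field K] [Field L] [Algebra K L] [Fintype K] [Fintype L]
    (hK : Fintype.card K = (p ^ t) ^ n) (hL : Fintype.card L = (p ^ t) ^ (n * r)) :
    (r = p → (fixedAffineSets K L r ((p ^ t) ^ n)).ncard = 1) ∧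
    (r ≠ p → ¬ r ∣ (p ^ t) ^ n - 1 → (fixedAffineSets K L r ((p ^ t) ^ n)).ncard = 0) ∧
    (r ≠ p → r ∣ (p ^ t) ^ n - 1 →
      (fixedAffineSets K L r ((p ^ t) ^ n)).ncard = r - 1) := by
  have : Fact p.Prime := ⟨hp⟩
  have : CharP K p := charP_of_card_eq_prime_pow (hK.trans (pow_mul p t n).symm)
  obtain rfl : Module.finrank K L = r := by
    apply Nat.pow_right_injective (FiniteField.isPrimePow_card K).two_le
    dsimp only
    rw [← Module.card_eq_pow_finrank, hL, hK, pow_mul]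
  rw [← hK]
  have hr0 (hrp : Module.finrank K L ≠ p) : (Module.finrank K L : K) ≠ 0 := fun h =>
    hrp ((Nat.prime_dvd_prime_iff_eq hp hr).1 ((CharP.cast_eq_zero_iff K p _).1 h)).symm
  refine ⟨fun hrp => ?_, fun hrp hdvd => ?_, fun hrp hdvd => ?_⟩
  · subst hrp
    exact ncard_fixedAffineSets_of_charP
  · rw [ncard_fixedAffineSets_of_cast_ne_zero hr (hr0 hrp), ncard_setOf_pow_eq_one_and_ne_one hr,
      if_neg hdvd]
  · rw [ncard_fixedAffineSets_of_cast_ne_zero hr (hr0 hrp), ncard_setOf_pow_eq_one_and_ne_one hr,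
      if_pos hdvd]

/-- Let `n` and `r` be distinct primes with `r > 2` and `S = S(n, r)`.
The number of affine sets in `𝔸` fixed under `σ^n` (pointwise image), where `σ : x ↦ x ^ q`
with `q = p ^ t`, is: `1` if `r = p`; `0` if `r ≠ p` and `r ∤ q^n - 1`; and `r - 1` if
`r ≠ p` and `r ∣ q^n - 1`. -/
theorem count_fixed_affineSets_sigma_pow_n_distinct_primes
    (p t n r : ℕ) (hp : p.Prime) (ht : 0 < t) (hn : n.Prime) (hr : r.Prime)
    (hnr : n ≠ r) (hr2 : 2 < r)
    (K L : Type*) [Field K] [Field L] [Algebra K L] [Fintype K] [Fintype L]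
    (hK : Fintype.card K = (p ^ t) ^ n) (hL : Fintype.card L = (p ^ t) ^ (n * r)) :
    (r = p → (fixedAffineSets K L r ((p ^ t) ^ n)).ncard = 1) ∧
    (r ≠ p → ¬ r ∣ (p ^ t) ^ n - 1 → (fixedAffineSets K L r ((p ^ t) ^ n)).ncard = 0) ∧
    (r ≠ p → r ∣ (p ^ t) ^ n - 1 →
      (fixedAffineSets K L r ((p ^ t) ^ n)).ncard = r - 1) :=
  count_fixed_affineSets_sigma_pow_n_distinct_primes_general p t n r hp hr K L hK hL
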